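/- arXiv:2205.14214 — 2 statements merged into one kernel-verified Lean document; each statement's English description precedes it below -/
import Mathlib

section
/- Let Γ be a 4-linear form on ℝ^d (taking three vectors v, v', u and one covector ξ) that is (a) symmetric in its first three vector arguments and (b) invariant under the octahedral group (all signed coordinate permutations), and suppose in addition that Γ(v,v',e_1,e^1) defines, for fixed third and fourth arguments, a symmetric bilinear form which is invariant under the octahedral subgroup fixing e_1. Then there exist constants μ_⊥ and μ_∥ such that Γ_{ijmn} = μ_⊥(δ_{ij}δ_{mn} + δ_{im}δ_{jn} + δ_{in}δ_{jm}) + (μ_∥ − 2μ_⊥) δ_{ijmn}, where δ_{ijmn} = 1 if i = j = m = n and 0 otherwise. -/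
/-- A 4-linear form `Γ` on `ℝ^d` (three vectors and a covector, represented by its
components `Γ i j m n`), symmetric in its first three arguments and invariant under the
octahedral group (signed coordinate permutations), with `Γ(·,·,e₁,e¹)` a symmetric bilinear
form invariant under the octahedral subgroup fixing `e₁`, is of the form
`Γ_{ijmn} = μ⊥(δ_{ij}δ_{mn} + δ_{im}δ_{jn} + δ_{in}δ_{jm}) + (μ∥ − 2μ⊥) δ_{ijmn}`. -/
theorem stmt_2 (d : ℕ) (hd : 0 < d)
    (Γ : Fin d → Fin d → Fin d → Fin d → ℝ)
    (hsym1 : ∀ i j m n, Γ i j m n = Γ j i m n)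
    (hsym2 : ∀ i j m n, Γ i j m n = Γ i m j n)
    (hoct : ∀ (σ : Equiv.Perm (Fin d)) (ε : Fin d → ℝ), (∀ i, ε i = 1 ∨ ε i = -1) →
      ∀ i j m n, Γ i j m n = ε i * ε j * ε m * ε n * Γ (σ i) (σ j) (σ m) (σ n))
    (hb_symm : ∀ i j, Γ i j ⟨0, hd⟩ ⟨0, hd⟩ = Γ j i ⟨0, hd⟩ ⟨0, hd⟩)
    (hb_inv : ∀ (σ : Equiv.Perm (Fin d)) (ε : Fin d → ℝ), (∀ i, ε i = 1 ∨ ε i = -1) →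
      σ ⟨0, hd⟩ = ⟨0, hd⟩ → ε ⟨0, hd⟩ = 1 →
      ∀ i j, Γ i j ⟨0, hd⟩ ⟨0, hd⟩ = ε i * ε j * Γ (σ i) (σ j) ⟨0, hd⟩ ⟨0, hd⟩) :
    ∃ μperp μpar : ℝ, ∀ i j m n, Γ i j m n =
      μperp * ((if i = j then (1:ℝ) else 0) * (if m = n then (1:ℝ) else 0)
        + (if i = m then (1:ℝ) else 0) * (if j = n then (1:ℝ) else 0)
        + (if i = n then (1:ℝ) else 0) * (if j = m then (1:ℝ) else 0))
      + (μpar - 2 * μperp) * (if i = j ∧ j = m ∧ m = n then (1:ℝ) else 0) := by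

  -- general permutation invariance (ε ≡ 1)
  have permE : ∀ (σ : Equiv.Perm (Fin d)) i j m n, Γ i j m n = Γ (σ i) (σ j) (σ m) (σ n) := by
    intro σ i j m n
    simpa using hoct σ (fun _ => 1) (fun _ => Or.inl rfl) i j m n
  -- sign flip at one coordinate
  have flip : ∀ (k i j m n : Fin d), Γ i j m n =
      (if i = k then (-1:ℝ) else 1) * (if j = k then (-1:ℝ) else 1) *
      (if m = k then (-1:ℝ) else 1) * (if n = k then (-1:ℝ) else 1) * Γ i j m n := by
    intro k i j m n
    have := hoct (Equiv.refl _) (fun x => if x = k then (-1:ℝ) else 1)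
      (fun x => by by_cases h : x = k <;> simp [h]) i j m n
    simpa using this
  have zero_i : ∀ i j m n : Fin d, i ≠ j → i ≠ m → i ≠ n → Γ i j m n = 0 := by
    intro i j m n h1 h2 h3
    have h := flip i i j m n
    simp [h1.symm, h2.symm, h3.symm] at h
    linarith
  have zero_j : ∀ i j m n : Fin d, j ≠ i → j ≠ m → j ≠ n → Γ i j m n = 0 := by
    intro i j m n h1 h2 h3
    rw [hsym1]; exact zero_i j i m n h1 h2 h3
  have zero_m : ∀ i j m n : Fin d, m ≠ i → m ≠ j → m ≠ n → Γ i j m n = 0 := by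
    intro i j m n h1 h2 h3
    rw [hsym2, hsym1]; exact zero_i m i j n h1 h2 h3
  have zero_n : ∀ i j m n : Fin d, n ≠ i → n ≠ j → n ≠ m → Γ i j m n = 0 := by
    intro i j m n h1 h2 h3
    have h := flip n i j m n
    simp [h1.symm, h2.symm, h3.symm] at h
    linarith
  -- transport of the abba pattern
  have key : ∀ a b x y : Fin d, a ≠ b → x ≠ y → Γ a b b a = Γ x y y x := by
    intro a b x y hab hxy
    have hxb' : x ≠ Equiv.swap a x b := by
      intro h
      apply hab
      apply (Equiv.swap a x).injective
      rw [Equiv.swap_apply_left, ← h]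
    have h := permE ((Equiv.swap a x).trans (Equiv.swap (Equiv.swap a x b) y)) a b b a
    simp only [Equiv.trans_apply, Equiv.swap_apply_left] at h
    rw [Equiv.swap_apply_of_ne_of_ne hxb' hxy] at h
    exact h
  -- all-equal transport
  have keyE : ∀ x : Fin d, Γ x x x x = Γ ⟨0, hd⟩ ⟨0, hd⟩ ⟨0, hd⟩ ⟨0, hd⟩ := by
    intro x
    have h := permE (Equiv.swap x ⟨0, hd⟩) x x x x
    rwa [Equiv.swap_apply_left] at h
  by_cases hd2 : 1 < d
  · set i0 : Fin d := ⟨0, hd⟩ with hi0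
    set i1 : Fin d := ⟨1, hd2⟩ with hi1
    have h01 : i0 ≠ i1 := by simp [hi0, hi1, Fin.ext_iff]
    refine ⟨Γ i0 i1 i1 i0, Γ i0 i0 i0 i0 - Γ i0 i1 i1 i0, ?_⟩
    have P1 : ∀ a b : Fin d, a ≠ b → Γ a b b a = Γ i0 i1 i1 i0 := fun a b hab =>
      key a b i0 i1 hab h01
    have P2 : ∀ a b : Fin d, a ≠ b → Γ a a b b = Γ i0 i1 i1 i0 := by
      intro a b hab
      have h1 : Γ a a b b = Γ b b a a := by
        have := permE (Equiv.swap a b) a a b b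
        simpa [Equiv.swap_apply_left, Equiv.swap_apply_right] using this
      rw [h1, hsym2 b b a a, hsym1 b a b a]
      exact P1 a b hab
    have P3 : ∀ a b : Fin d, a ≠ b → Γ a b a b = Γ i0 i1 i1 i0 := by
      intro a b hab
      rw [hsym2]; exact P2 a b hab
    intro i j m n
    by_cases hij : i = j
    · subst hij
      by_cases him : i = m
      · subst him
        by_cases hin : i = n
        · subst hin
          rw [keyE i]
          norm_num
          ring
        · rw [zero_n i i i n (Ne.symm hin) (Ne.symm hin) (Ne.symm hin)]
          simp [hin, fun h : i = n ∧ n = n => hin h.1]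
      · by_cases hmn : m = n
        · subst hmn
          rw [P2 i m him]
          simp [him, fun h : i = m ∧ m = m => him h.1]
        · by_cases hin : i = n
          · subst hin
            rw [zero_m i i m i (Ne.symm him) (Ne.symm him) hmn]
            simp [him, hmn, Ne.symm him]
          · rw [zero_m i i m n (Ne.symm him) (Ne.symm him) hmn]
            simp [him, hmn, hin]
    · by_cases him : i = m
      · subst him
        by_cases hjn : j = n
        · subst hjn
          rw [P3 i j hij]
          simp [hij, fun h : i = j ∧ j = i ∧ i = j => hij h.1]
        · by_cases hin : i = n
          · subst hin
            rw [zero_j i j i i (Ne.symm hij) (Ne.symm hij) (Ne.symm hij)]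
            simp [hij, hjn, Ne.symm hij]
          · rw [zero_n i j i n (Ne.symm hin) (Ne.symm hjn) (Ne.symm hin)]
            simp [hij, hjn, hin]
      · by_cases hin : i = n
        · subst hin
          by_cases hjm : j = m
          · subst hjm
            rw [P1 i j hij]
            simp [hij, fun h : i = j ∧ j = j ∧ j = i => hij h.1]
          · rw [zero_j i j m i (Ne.symm hij) hjm (Ne.symm hij)]
            simp [hij, hjm, Ne.symm hij]
        · rw [zero_i i j m n hij him hin]
          simp [hij, him, hin]
  · -- d = 1
    have hd1 : d = 1 := by omega
    subst hd1
    refine ⟨0, Γ ⟨0, hd⟩ ⟨0, hd⟩ ⟨0, hd⟩ ⟨0, hd⟩, ?_⟩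
    intro i j m n
    have hi : i = ⟨0, hd⟩ := Subsingleton.elim _ _
    have hj : j = ⟨0, hd⟩ := Subsingleton.elim _ _
    have hm : m = ⟨0, hd⟩ := Subsingleton.elim _ _
    have hn : n = ⟨0, hd⟩ := Subsingleton.elim _ _
    subst hi hj hm hn
    simp
end

section
/- Let p ≥ 1 and let v : ℝ^d → ℝ be a smooth 1-periodic function of zero average on [−1/2,1/2)^d, depending measurably on a random parameter with expectation ⟨·⟩. Then the annealed Poincaré–Wirtinger inequality holds: ∫_{[−1/2,1/2)^d} ⟨|v|^{2p}⟩^{1/(2p)} ≤ C(d) ∫_{[−1/2,1/2)^d} ⟨|∇v|^{2p}⟩^{1/(2p)}. -/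
/-!
Zero mean and periodicity give `v x = ∫_{y ∈ box} (v x - v (x + y))`, and writing
`v (x + y) - v x` as a line integral of `∇v` along `[x, x + y]` yields the pointwise bound
`|v x| ≤ √d ∫_{y ∈ box} ∫_0^1 |∇v (x + t y)| dt dy`. Minkowski's integral inequality moves the
annealed norm `⟨|·|^q⟩^{1/q}` inside the `(y, t)`-integral, and after integrating over `x ∈ box`
each shift `x ↦ x + t y` drops out by periodicity. This gives the constant `C(d) = √d`.
-/

open MeasureTheory Set Filter Topology
open scoped ENNReal Pointwise

noncomputable def latt (d : ℕ) (k : Fin d → ℤ) : EuclideanSpace ℝ (Fin d) :=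
  (EuclideanSpace.equiv (Fin d) ℝ).symm (fun j => (k j : ℝ))

def box (d : ℕ) : Set (EuclideanSpace ℝ (Fin d)) :=
  {x | ∀ i, x i ∈ Set.Ico (-(1/2) : ℝ) (1/2)}

section UnitCell

variable {d : ℕ}

abbrev integerLattice (d : ℕ) : AddSubgroup (EuclideanSpace ℝ (Fin d)) :=
  (Submodule.span ℤ (range (EuclideanSpace.basisFun (Fin d) ℝ).toBasis)).toAddSubgroup

instance : Countable (integerLattice d) :=
  inferInstanceAs (Countable (Submodule.span ℤ (range (EuclideanSpace.basisFun (Fin d) ℝ).toBasis)))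

lemma exists_latt_eq_of_mem_integerLattice {x : EuclideanSpace ℝ (Fin d)}
    (hx : x ∈ integerLattice d) : ∃ k, latt d k = x := by
  obtain ⟨k, rfl⟩ := (Submodule.mem_span_range_iff_exists_fun ℤ).mp hx
  refine ⟨k, PiLp.ext fun i => ?_⟩
  simp [latt, EuclideanSpace.basisFun_apply, Pi.single_apply]

lemma vadd_invariant_of_periodic {β : Type*} {f : EuclideanSpace ℝ (Fin d) → β}
    (hf : ∀ x k, f (x + latt d k) = f x) (g : integerLattice d) (x : EuclideanSpace ℝ (Fin d)) :
    f (g +ᵥ x) = f x := by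
  obtain ⟨k, hk⟩ := exists_latt_eq_of_mem_integerLattice g.2
  rw [AddSubgroup.vadd_def, vadd_eq_add, ← hk, add_comm, hf]

lemma box_eq_vadd_fundamentalDomain :
    box d = (WithLp.toLp 2 (fun _ => -(1/2 : ℝ)) : EuclideanSpace ℝ (Fin d)) +ᵥ
      ZSpan.fundamentalDomain (EuclideanSpace.basisFun (Fin d) ℝ).toBasis := by
  ext x
  simp only [box, mem_ofPred_eq, mem_vadd_set_iff_neg_vadd_mem, ZSpan.mem_fundamentalDomain,
    OrthonormalBasis.coe_toBasis_repr_apply, EuclideanSpace.basisFun_repr, vadd_eq_add, mem_Ico,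
    PiLp.add_apply, PiLp.neg_apply, neg_neg, one_div]
  refine forall_congr' fun i => ?_
  constructor <;> rintro ⟨h₁, h₂⟩ <;> constructor <;> linarith

lemma measurableSet_box : MeasurableSet (box d) := by
  rw [box_eq_vadd_fundamentalDomain]
  exact (ZSpan.fundamentalDomain_measurableSet _).const_vadd _

lemma isBounded_box : Bornology.IsBounded (box d) := by
  rw [box_eq_vadd_fundamentalDomain]
  exact (ZSpan.fundamentalDomain_isBounded _).vadd _

lemma volume_box : volume (box d) = 1 := by
  rw [box_eq_vadd_fundamentalDomain, measure_vadd,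
    measure_congr (ZSpan.fundamentalDomain_ae_parallelepiped _ volume)]
  exact (EuclideanSpace.basisFun (Fin d) ℝ).volume_parallelepiped

lemma isAddFundamentalDomain_vadd_box (a : EuclideanSpace ℝ (Fin d)) :
    IsAddFundamentalDomain (integerLattice d) (a +ᵥ box d) volume := by
  rw [box_eq_vadd_fundamentalDomain, vadd_vadd]
  exact (ZSpan.isAddFundamentalDomain' _ volume).vadd_of_comm _

lemma preimage_add_right_vadd_box (a : EuclideanSpace ℝ (Fin d)) :
    (· + a) ⁻¹' (a +ᵥ box d) = box d := by
  ext x; simp [mem_vadd_set_iff_neg_vadd_mem]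

lemma setLIntegral_box_comp_add_right {f : EuclideanSpace ℝ (Fin d) → ℝ≥0∞}
    (hf : ∀ x k, f (x + latt d k) = f x) (a : EuclideanSpace ℝ (Fin d)) :
    ∫⁻ x in box d, f (x + a) = ∫⁻ x in box d, f x := by
  conv_lhs => rw [← preimage_add_right_vadd_box a]
  rw [(measurePreserving_add_right volume a).setLIntegral_comp_preimage_emb
    (measurableEmbedding_addRight a)]
  simpa using (isAddFundamentalDomain_vadd_box a).setLIntegral_eq
    (isAddFundamentalDomain_vadd_box 0) f (vadd_invariant_of_periodic hf)

lemma setIntegral_box_comp_add_right {f : EuclideanSpace ℝ (Fin d) → ℝ}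
    (hf : ∀ x k, f (x + latt d k) = f x) (a : EuclideanSpace ℝ (Fin d)) :
    ∫ x in box d, f (x + a) = ∫ x in box d, f x := by
  conv_lhs => rw [← preimage_add_right_vadd_box a]
  rw [(measurePreserving_add_right volume a).setIntegral_preimage_emb
    (measurableEmbedding_addRight a)]
  simpa using (isAddFundamentalDomain_vadd_box a).setIntegral_eq
    (isAddFundamentalDomain_vadd_box 0) (vadd_invariant_of_periodic hf)

end UnitCell

section Minkowski

variable {α β : Type*} [MeasurableSpace α] [MeasurableSpace β] {μ : Measure α} {ν : Measure β}
  {F : α → β → ℝ≥0∞} {q : ℝ}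

/-- With `I a = ∫⁻ b, F a b ∂ν` and `A = ∫⁻ a, I a ^ q ∂μ`, Hölder's inequality against
`I ^ (q - 1)` gives `A ≤ A ^ (1 - 1/q) * RHS`, and a finite nonzero `A` can be cancelled. -/
lemma lintegral_Lp_lintegral_le_of_ne_top [SFinite μ] [SFinite ν]
    (hF : Measurable (Function.uncurry F)) (hq : 1 < q)
    (hA : ∫⁻ a, (∫⁻ b, F a b ∂ν) ^ q ∂μ ≠ ⊤) :
    (∫⁻ a, (∫⁻ b, F a b ∂ν) ^ q ∂μ) ^ (1 / q) ≤ ∫⁻ b, (∫⁻ a, F a b ^ q ∂μ) ^ (1 / q) ∂ν := by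
  set I : α → ℝ≥0∞ := fun a => ∫⁻ b, F a b ∂ν
  set A := ∫⁻ a, I a ^ q ∂μ
  have hI : Measurable I := hF.lintegral_prod_right'
  have hFa (a : α) : Measurable (F a) := hF.comp measurable_prodMk_left
  have hFb (b : β) : Measurable (F · b) := hF.comp measurable_prodMk_right
  have hpq := Real.HolderConjugate.conjExponent hq
  set q' := q.conjExponent
  have hq0 : 0 < q := hpq.pos
  have hq'0 : 0 < q' := hpq.symm.pos
  rcases eq_or_ne A 0 with hA0 | hA0
  · rw [hA0, ENNReal.zero_rpow_of_pos (by positivity)]; exact zero_le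
  have hA' : A ^ (1 / q') ≠ ⊤ := ENNReal.rpow_ne_top_of_nonneg (by positivity) hA
  have hA'0 : A ^ (1 / q') ≠ 0 := by simp [ENNReal.rpow_eq_zero_iff, hA0, hA]
  have hHolder (b : β) :
      ∫⁻ a, I a ^ (q - 1) * F a b ∂μ ≤ A ^ (1 / q') * (∫⁻ a, F a b ^ q ∂μ) ^ (1 / q) := by
    have hpow : ∀ a, (I a ^ (q - 1)) ^ q' = I a ^ q := fun a => by
      rw [← ENNReal.rpow_mul, hpq.sub_one_mul_conj]
    simpa only [hpow, Pi.mul_apply] using ENNReal.lintegral_mul_le_Lp_mul_Lq μ hpq.symm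
      (hI.pow_const (q - 1)).aemeasurable (hFb b).aemeasurable
  have hA_le : A ≤ A ^ (1 / q') * ∫⁻ b, (∫⁻ a, F a b ^ q ∂μ) ^ (1 / q) ∂ν := calc
    A = ∫⁻ a, ∫⁻ b, I a ^ (q - 1) * F a b ∂ν ∂μ := by
        refine lintegral_congr fun a => ?_
        rw [lintegral_const_mul _ (hFa a)]
        conv_lhs => rw [← sub_add_cancel q 1]
        rw [ENNReal.rpow_add_of_nonneg _ _ (by linarith) zero_le_one, ENNReal.rpow_one]
    _ = ∫⁻ b, ∫⁻ a, I a ^ (q - 1) * F a b ∂μ ∂ν :=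
        lintegral_lintegral_swap (((hI.comp measurable_fst).pow_const _).mul hF).aemeasurable
    _ ≤ ∫⁻ b, A ^ (1 / q') * (∫⁻ a, F a b ^ q ∂μ) ^ (1 / q) ∂ν := lintegral_mono hHolder
    _ = A ^ (1 / q') * ∫⁻ b, (∫⁻ a, F a b ^ q ∂μ) ^ (1 / q) ∂ν := lintegral_const_mul' _ _ hA'
  have hsplit : A ^ (1 / q) * A ^ (1 / q') = A := by
    rw [← ENNReal.rpow_add _ _ hA0 hA, one_div, one_div, hpq.inv_add_inv_eq_one, ENNReal.rpow_one]
  rw [← ENNReal.mul_le_mul_iff_left hA'0 hA', hsplit, mul_comm]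
  exact hA_le

/-- **Minkowski's integral inequality**. Truncating `F` at height `n` makes the left-hand side
finite; monotone convergence removes the truncation. -/
theorem lintegral_Lp_lintegral_le_lintegral_Lp [IsFiniteMeasure μ] [IsFiniteMeasure ν]
    (hF : Measurable (Function.uncurry F)) (hq : 1 < q) :
    (∫⁻ a, (∫⁻ b, F a b ∂ν) ^ q ∂μ) ^ (1 / q) ≤ ∫⁻ b, (∫⁻ a, F a b ^ q ∂μ) ^ (1 / q) ∂ν := by
  have hq0 : 0 < q := by linarith
  let Fn : ℕ → α → β → ℝ≥0∞ := fun n a b => F a b ⊓ n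
  have hFn : ∀ n, Measurable (Function.uncurry (Fn n)) := fun n => hF.inf measurable_const
  have hFn_mono : ∀ a b, Monotone fun n => Fn n a b := fun a b _ _ hnm =>
    inf_le_inf_left _ (Nat.cast_le.mpr hnm)
  have hFn_ne_top : ∀ n, ∫⁻ a, (∫⁻ b, Fn n a b ∂ν) ^ q ∂μ ≠ ⊤ := fun n => by
    refine ne_top_of_le_ne_top (b := ∫⁻ _, ((n : ℝ≥0∞) * ν univ) ^ q ∂μ) ?_ ?_
    · simp only [lintegral_const]
      exact ENNReal.mul_ne_top (by finiteness) (measure_ne_top μ _)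
    · refine lintegral_mono fun a => ENNReal.rpow_le_rpow ?_ hq0.le
      exact (lintegral_mono fun b => inf_le_right).trans (lintegral_const _).le
  have hFna (n : ℕ) (a : α) : Measurable (Fn n a) := (hFn n).comp measurable_prodMk_left
  have rpow_iSup {r : ℝ} (hr : 0 < r) (f : ℕ → ℝ≥0∞) : (⨆ n, f n) ^ r = ⨆ n, f n ^ r :=
    (ENNReal.orderIsoRpow r hr).map_iSup f
  have hlim : ∫⁻ a, (∫⁻ b, F a b ∂ν) ^ q ∂μ = ⨆ n, ∫⁻ a, (∫⁻ b, Fn n a b ∂ν) ^ q ∂μ := by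
    have hinner (a : α) : (∫⁻ b, F a b ∂ν) ^ q = ⨆ n, (∫⁻ b, Fn n a b ∂ν) ^ q := by
      rw [← rpow_iSup hq0, ← lintegral_iSup (hFna · a) (fun _ _ h b => hFn_mono a b h)]
      simp_rw [Fn, ← inf_iSup_eq, ENNReal.iSup_natCast, inf_top_eq]
    rw [lintegral_congr hinner]
    exact lintegral_iSup (fun n => (hFn n).lintegral_prod_right'.pow_const _)
      (fun _ _ h a => ENNReal.rpow_le_rpow (lintegral_mono fun b => hFn_mono a b h) hq0.le)
  rw [hlim, rpow_iSup (by positivity)]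
  refine iSup_le fun n => (lintegral_Lp_lintegral_le_of_ne_top (hFn n) hq (hFn_ne_top n)).trans ?_
  gcongr
  exact inf_le_left

end Minkowski

section Measurability

variable {Ω E : Type*} [MeasurableSpace Ω] [NormedAddCommGroup E] [NormedSpace ℝ E]
  [MeasurableSpace E] [BorelSpace E] {v : Ω → E → ℝ}

lemma measurable_fderiv_apply_of_measurable_uncurry (hv : Measurable (Function.uncurry v))
    (hdiff : ∀ ω, Differentiable ℝ (v ω)) (u : E) :
    Measurable fun p : Ω × E => fderiv ℝ (v p.1) p.2 u := by
  let t : ℕ → ℝ := fun n => 1 / ((n : ℝ) + 1)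
  have ht : Tendsto t atTop (𝓝[≠] 0) :=
    tendsto_nhdsWithin_of_tendsto_nhds_of_eventually_within _
      tendsto_one_div_add_atTop_nhds_zero_nat
      (Eventually.of_forall fun n => mem_compl_singleton_iff.2 (by positivity))
  have hshift (c : E) : Measurable fun p : Ω × E => v p.1 (p.2 + c) :=
    hv.comp (measurable_fst.prodMk (measurable_snd.add_const c))
  refine measurable_of_tendsto_metrizable
    (f := fun n p => (t n)⁻¹ • (v p.1 (p.2 + t n • u) - v p.1 p.2)) (fun n => ?_) (tendsto_pi_nhds.2 fun p => ?_)
  · exact ((hshift (t n • u)).sub hv).const_smul (t n)⁻¹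
  · exact ((hdiff p.1 p.2).hasFDerivAt.hasLineDerivAt u).tendsto_slope_zero.comp ht

lemma measurable_fderiv_of_measurable_uncurry [FiniteDimensional ℝ E]
    (hv : Measurable (Function.uncurry v)) (hdiff : ∀ ω, Differentiable ℝ (v ω)) :
    Measurable fun p : Ω × E => fderiv ℝ (v p.1) p.2 := by
  let b := Module.finBasis ℝ E
  have hrepr (L : E →L[ℝ] ℝ) : L = ∑ i, L (b i) • LinearMap.toContinuousLinearMap (b.coord i) := by
    ext x
    conv_lhs => rw [← b.sum_repr x]
    simp only [map_sum, map_smul, smul_eq_mul, FunLike.coe_sum, Finset.sum_apply,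
      FunLike.coe_smul, Pi.smul_apply, LinearMap.coe_toContinuousLinearMap',
      Module.Basis.coord_apply, mul_comm]
  rw [funext fun p : Ω × E => hrepr (fderiv ℝ (v p.1) p.2)]
  exact Finset.measurable_sum _ fun i _ =>
    (measurable_fderiv_apply_of_measurable_uncurry hv hdiff (b i)).smul_const _

end Measurability

lemma enorm_sub_le_lintegral_fderiv_mul {E F : Type*} [NormedAddCommGroup E] [NormedSpace ℝ E]
    [NormedAddCommGroup F] [NormedSpace ℝ F] {f : E → F} (hf : ContDiff ℝ 1 f) (x y : E) :
    ‖f (x + y) - f x‖ₑ ≤ (∫⁻ t in Icc (0 : ℝ) 1, ‖fderiv ℝ f (x + t • y)‖ₑ) * ‖y‖ₑ := by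
  let g : ℝ → F := fun t => f (x + t • y)
  have hg : ContDiff ℝ 1 g := hf.comp (contDiff_const.add (contDiff_id.smul contDiff_const))
  have hderiv (t : ℝ) : deriv g t = fderiv ℝ f (x + t • y) y := by
    have hline : HasDerivAt (fun t : ℝ => x + t • y) y t := by
      simpa using ((hasDerivAt_id t).smul_const y).const_add x
    exact ((hf.differentiable one_ne_zero _).hasFDerivAt.comp_hasDerivAt t hline).deriv
  calc ‖f (x + y) - f x‖ₑ = ‖g 1 - g 0‖ₑ := by simp [g]
    _ ≤ ∫⁻ t in Icc 0 1, ‖deriv g t‖ₑ :=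
        enorm_sub_le_lintegral_deriv_of_contDiffOn_Icc hg.contDiffOn zero_le_one
    _ ≤ ∫⁻ t in Icc 0 1, ‖fderiv ℝ f (x + t • y)‖ₑ * ‖y‖ₑ :=
        lintegral_mono fun t => hderiv t ▸ ContinuousLinearMap.le_opENorm _ _
    _ = _ := lintegral_mul_const' _ _ enorm_ne_top

section PeriodicCell

variable {d : ℕ}

lemma norm_le_sqrt_of_mem_box {y : EuclideanSpace ℝ (Fin d)} (hy : y ∈ box d) : ‖y‖ ≤ √d := by
  rw [EuclideanSpace.norm_eq]
  gcongr
  calc ∑ i, ‖y i‖ ^ 2 ≤ ∑ _i : Fin d, (1 : ℝ) := Finset.sum_le_sum fun i _ => by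
        have := hy i
        rw [Real.norm_eq_abs, sq_abs]
        nlinarith [this.1, this.2]
    _ = d := by simp

lemma integrableOn_box {f : EuclideanSpace ℝ (Fin d) → ℝ} (hf : Continuous f) :
    IntegrableOn f (box d) :=
  (hf.continuousOn.integrableOn_compact isBounded_box.isCompact_closure).mono_set subset_closure

/-- The uniform law of `(y, t) ∈ box d × [0, 1]`, parametrising the segments `[x, x + y]`. -/
noncomputable def boxSegmentMeasure (d : ℕ) : Measure (EuclideanSpace ℝ (Fin d) × ℝ) :=
  (volume.restrict (box d)).prod (volume.restrict (Icc 0 1))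

instance : IsProbabilityMeasure (boxSegmentMeasure d) := by
  have : IsProbabilityMeasure (volume.restrict (box d)) := ⟨by simp [volume_box]⟩
  have : IsProbabilityMeasure (volume.restrict (Icc (0 : ℝ) 1)) := ⟨by simp⟩
  unfold boxSegmentMeasure
  infer_instance

lemma enorm_le_lintegral_boxSegmentMeasure {f : EuclideanSpace ℝ (Fin d) → ℝ}
    (hf : ContDiff ℝ 1 f) (hper : ∀ x k, f (x + latt d k) = f x) (hmean : ∫ x in box d, f x = 0)
    (x : EuclideanSpace ℝ (Fin d)) :
    ‖f x‖ₑ ≤ ENNReal.ofReal √d * ∫⁻ p, ‖fderiv ℝ f (x + p.2 • p.1)‖ₑ ∂boxSegmentMeasure d := by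
  have hrep : f x = ∫ y in box d, (f x - f (x + y)) := by
    have hshift : ∫ y in box d, f (x + y) = 0 := by
      simpa only [add_comm x, hmean] using setIntegral_box_comp_add_right hper x
    have hconst : IntegrableOn (fun _ => f x) (box d) := integrableOn_const (by simp [volume_box])
    have hshifted : IntegrableOn (fun y => f (x + y)) (box d) :=
      integrableOn_box (hf.continuous.comp (continuous_const_add x))
    rw [integral_sub hconst hshifted, hshift, sub_zero,
      setIntegral_const, measureReal_def, volume_box]
    simp
  have hfderiv : Continuous fun p : EuclideanSpace ℝ (Fin d) × ℝ =>
      ‖fderiv ℝ f (x + p.2 • p.1)‖ₑ := by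
    have := hf.continuous_fderiv one_ne_zero
    fun_prop
  rw [boxSegmentMeasure, lintegral_prod _ hfderiv.aemeasurable,
    ← lintegral_const_mul' _ _ ENNReal.ofReal_ne_top]
  calc ‖f x‖ₑ = ‖∫ y in box d, (f x - f (x + y))‖ₑ := by rw [← hrep]
    _ ≤ ∫⁻ y in box d, ‖f x - f (x + y)‖ₑ := enorm_integral_le_lintegral_enorm _
    _ ≤ ∫⁻ y in box d, ENNReal.ofReal √d * ∫⁻ t in Icc (0 : ℝ) 1, ‖fderiv ℝ f (x + t • y)‖ₑ := by
        refine setLIntegral_mono' measurableSet_box fun y hy => ?_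
        rw [enorm_sub_rev, mul_comm]
        refine (enorm_sub_le_lintegral_fderiv_mul hf x y).trans ?_
        gcongr
        rw [← ofReal_norm]
        exact ENNReal.ofReal_le_ofReal (norm_le_sqrt_of_mem_box hy)

lemma setLIntegral_box_lintegral_comp_add {β : Type*} [MeasurableSpace β] {ν : Measure β}
    [SFinite ν] {G : EuclideanSpace ℝ (Fin d) → ℝ≥0∞} (hG : Measurable G)
    (hper : ∀ x k, G (x + latt d k) = G x) {s : β → EuclideanSpace ℝ (Fin d)} (hs : Measurable s) :
    ∫⁻ x in box d, ∫⁻ b, G (x + s b) ∂ν = ν univ * ∫⁻ x in box d, G x := by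
  have hGs : Measurable fun p : EuclideanSpace ℝ (Fin d) × β => G (p.1 + s p.2) :=
    hG.comp (measurable_fst.add (hs.comp measurable_snd))
  rw [lintegral_lintegral_swap (f := fun x b => G (x + s b)) hGs.aemeasurable]
  simp only [setLIntegral_box_comp_add_right hper, lintegral_const, mul_comm]

end PeriodicCell

section Annealed

variable {d : ℕ} {Ω : Type*} [MeasurableSpace Ω] {μ : Measure Ω} {q : ℝ}

lemma lintegral_Lp_const_mul {f : Ω → ℝ≥0∞} {c : ℝ≥0∞} (hc : c ≠ ⊤) (hq : 0 < q) :
    (∫⁻ ω, (c * f ω) ^ q ∂μ) ^ (1 / q) = c * (∫⁻ ω, f ω ^ q ∂μ) ^ (1 / q) := by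
  simp_rw [ENNReal.mul_rpow_of_nonneg _ _ hq.le]
  rw [lintegral_const_mul' _ _ (ENNReal.rpow_ne_top_of_nonneg hq.le hc),
    ENNReal.mul_rpow_of_nonneg _ _ (by positivity), ← ENNReal.rpow_mul, mul_one_div_cancel hq.ne',
    ENNReal.rpow_one]

theorem setLIntegral_box_Lp_le_of_le_lintegral_shift [IsFiniteMeasure μ] {β : Type*}
    [MeasurableSpace β] {ν : Measure β} [IsProbabilityMeasure ν]
    {s : β → EuclideanSpace ℝ (Fin d)} (hs : Measurable s)
    {W Φ : Ω → EuclideanSpace ℝ (Fin d) → ℝ≥0∞} (hΦ : Measurable (Function.uncurry Φ))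
    (hper : ∀ ω x k, Φ ω (x + latt d k) = Φ ω x) {c : ℝ≥0∞} (hc : c ≠ ⊤) (hq : 1 < q)
    (hW : ∀ ω x, W ω x ≤ c * ∫⁻ b, Φ ω (x + s b) ∂ν) :
    ∫⁻ x in box d, (∫⁻ ω, W ω x ^ q ∂μ) ^ (1 / q) ≤
      c * ∫⁻ x in box d, (∫⁻ ω, Φ ω x ^ q ∂μ) ^ (1 / q) := by
  have hq0 : 0 < q := by linarith
  let G : EuclideanSpace ℝ (Fin d) → ℝ≥0∞ := fun z => (∫⁻ ω, Φ ω z ^ q ∂μ) ^ (1 / q)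
  have hG : Measurable G := (hΦ.pow_const q).lintegral_prod_left'.pow_const _
  have hGper (x : EuclideanSpace ℝ (Fin d)) (k : Fin d → ℤ) : G (x + latt d k) = G x := by
    simp only [G, hper]
  have hpointwise (x : EuclideanSpace ℝ (Fin d)) :
      (∫⁻ ω, W ω x ^ q ∂μ) ^ (1 / q) ≤ c * ∫⁻ b, G (x + s b) ∂ν := calc
    _ ≤ (∫⁻ ω, (c * ∫⁻ b, Φ ω (x + s b) ∂ν) ^ q ∂μ) ^ (1 / q) := by
        gcongr with ω
        exact hW ω x
    _ = c * (∫⁻ ω, (∫⁻ b, Φ ω (x + s b) ∂ν) ^ q ∂μ) ^ (1 / q) := lintegral_Lp_const_mul hc hq0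
    _ ≤ c * ∫⁻ b, G (x + s b) ∂ν := by
        gcongr
        exact lintegral_Lp_lintegral_le_lintegral_Lp
          (hΦ.comp (measurable_fst.prodMk (measurable_const.add (hs.comp measurable_snd)))) hq
  calc ∫⁻ x in box d, (∫⁻ ω, W ω x ^ q ∂μ) ^ (1 / q)
      ≤ ∫⁻ x in box d, c * ∫⁻ b, G (x + s b) ∂ν := lintegral_mono hpointwise
    _ = c * ∫⁻ x in box d, G x := by
        rw [lintegral_const_mul' _ _ hc, setLIntegral_box_lintegral_comp_add hG hGper hs,
          measure_univ, one_mul]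

end Annealed

theorem stmt_8_general (d : ℕ) (p : ℝ) (hp : 1 ≤ p) :
    ∃ C : ℝ≥0∞, C ≠ ⊤ ∧
      ∀ (Ω : Type) [MeasurableSpace Ω] (μ : Measure Ω), IsProbabilityMeasure μ →
        ∀ v : Ω → EuclideanSpace ℝ (Fin d) → ℝ,
          Measurable (Function.uncurry v) →
          (∀ ω, ContDiff ℝ (⊤ : ℕ∞) (v ω)) →
          (∀ ω x (k : Fin d → ℤ), v ω (x + latt d k) = v ω x) →
          (∀ ω, (∫ x in box d, v ω x) = 0) →
          (∫⁻ x in box d, (∫⁻ ω, (ENNReal.ofReal |v ω x|) ^ (2 * p) ∂μ) ^ (1 / (2 * p))) ≤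
            C * ∫⁻ x in box d,
              (∫⁻ ω, (ENNReal.ofReal ‖fderiv ℝ (v ω) x‖) ^ (2 * p) ∂μ) ^ (1 / (2 * p)) := by
  refine ⟨ENNReal.ofReal √d, ENNReal.ofReal_ne_top, fun Ω _ μ _ v hv hsmooth hper hmean => ?_⟩
  have hC1 (ω : Ω) : ContDiff ℝ 1 (v ω) := (hsmooth ω).of_le (by simp)
  have hfderiv_per (ω : Ω) (x : EuclideanSpace ℝ (Fin d)) (k : Fin d → ℤ) :
      ‖fderiv ℝ (v ω) (x + latt d k)‖ₑ = ‖fderiv ℝ (v ω) x‖ₑ := by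
    rw [← fderiv_comp_add_right, funext fun y => hper ω y k]
  simp only [← Real.norm_eq_abs, ofReal_norm]
  exact setLIntegral_box_Lp_le_of_le_lintegral_shift (ν := boxSegmentMeasure d)
    (measurable_snd.smul measurable_fst)
    (measurable_fderiv_of_measurable_uncurry hv fun ω => (hC1 ω).differentiable one_ne_zero).enorm
    hfderiv_per ENNReal.ofReal_ne_top (by linarith)
    fun ω x => enorm_le_lintegral_boxSegmentMeasure (hC1 ω) (hper ω) (hmean ω) x

/-- Annealed Poincaré–Wirtinger inequality: for a random smooth 1-periodic field `v` of zero
spatial average,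
`∫_cell ⟨|v|^{2p}⟩^{1/(2p)} ≤ C(d) ∫_cell ⟨|∇v|^{2p}⟩^{1/(2p)}`. -/
theorem stmt_8 (d : ℕ) (hd : 0 < d) (p : ℝ) (hp : 1 ≤ p) :
    ∃ C : ℝ≥0∞, C ≠ ⊤ ∧
      ∀ (Ω : Type) [MeasurableSpace Ω] (μ : Measure Ω), IsProbabilityMeasure μ →
        ∀ v : Ω → EuclideanSpace ℝ (Fin d) → ℝ,
          Measurable (Function.uncurry v) →
          (∀ ω, ContDiff ℝ (⊤ : ℕ∞) (v ω)) →
          (∀ ω x (k : Fin d → ℤ), v ω (x + latt d k) = v ω x) →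
          (∀ ω, (∫ x in box d, v ω x) = 0) →
          (∫⁻ x in box d, (∫⁻ ω, (ENNReal.ofReal |v ω x|) ^ (2 * p) ∂μ) ^ (1 / (2 * p))) ≤
            C * ∫⁻ x in box d,
              (∫⁻ ω, (ENNReal.ofReal ‖fderiv ℝ (v ω) x‖) ^ (2 * p) ∂μ) ^ (1 / (2 * p)) :=
  stmt_8_general d p hp
end
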